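/- arXiv:0911.5058 — 7 statements merged into one kernel-verified Lean document; each statement's English description precedes it below -/
import Mathlib

section
/- Let E be a real inner product space, let K : E →L[ℝ] E be a continuous linear operator that is skew-symmetric, i.e. ⟪K v, w⟫ = −⟪v, K w⟫ for all v, w ∈ E, let f : E → ℝ be twice continuously (Fréchet) differentiable with differentiable gradient g : E → E (i.e. (fderiv f m) v = ⟪g m, v⟫ for all m, v), and define the vector field X : E → E by X m = K (g m). Then for every m ∈ E the operator (fderiv X m) ∘ K is symmetric: for all v, w ∈ E, ⟪(fderiv X m) (K v), w⟫ = ⟪v, (fderiv X m) (K w)⟫. -/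
open RealInnerProductSpace Filter Topology

/-!
Writing `X = K ∘ g`, we get `dX(m) = K ∘ H` with `H = dg(m)` the Hessian of `f` at `m`, which is
symmetric by Schwarz's theorem. Skew-symmetry of `K` then gives
`⟪K (H (K v)), w⟫ = -⟪H (K v), K w⟫ = -⟪K v, H (K w)⟫ = ⟪v, K (H (K w))⟫`.
-/

section

variable {E : Type*} [NormedAddCommGroup E] [InnerProductSpace ℝ E]

theorem HasFDerivAt.of_fderiv_apply_eq_inner {f : E → ℝ} {u m : E}
    (hf : DifferentiableAt ℝ f m) (hu : ∀ v, fderiv ℝ f m v = ⟪u, v⟫) :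
    HasFDerivAt f (innerSL ℝ u) m := by
  convert hf.hasFDerivAt using 1
  ext v
  simp [hu]

theorem isSymmetric_fderiv_of_hasFDerivAt_innerSL {f : E → ℝ} {g : E → E} {m : E}
    (hf : ∀ᶠ x in 𝓝 m, HasFDerivAt f (innerSL ℝ (g x)) x) (hg : DifferentiableAt ℝ g m) :
    (fderiv ℝ g m : E →ₗ[ℝ] E).IsSymmetric := by
  intro a b
  have hg' : HasFDerivAt (fun x ↦ innerSL ℝ (g x)) ((innerSL ℝ).comp (fderiv ℝ g m)) m :=
    (innerSL ℝ).hasFDerivAt.comp m hg.hasFDerivAt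
  simpa [real_inner_comm a] using second_derivative_symmetric_of_eventually hf hg' a b

theorem LinearMap.IsSymmetric.skew_comp_comp_skew {K A : E →ₗ[ℝ] E}
    (hK : ∀ v w, ⟪K v, w⟫ = -⟪v, K w⟫) (hA : A.IsSymmetric) :
    (K ∘ₗ A ∘ₗ K).IsSymmetric := fun v w ↦ by
  simp only [LinearMap.comp_apply, hK, hA (K v), neg_neg]

end

/-- A necessary condition for a vector field `X = K ∘ grad f` (with `K` a constant
skew-symmetric continuous linear operator) to be Hamiltonian is the symmetry of
`dX(m) ∘ K` at every point `m`. -/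
theorem fderiv_comp_skew_symmetric
    {E : Type*} [NormedAddCommGroup E] [InnerProductSpace ℝ E]
    (K : E →L[ℝ] E) (hK : ∀ v w : E, ⟪K v, w⟫ = -⟪v, K w⟫)
    (f : E → ℝ) (g : E → E)
    (hf : ContDiff ℝ 2 f) (hg : Differentiable ℝ g)
    (hgrad : ∀ m v : E, fderiv ℝ f m v = ⟪g m, v⟫)
    (X : E → E) (hX : ∀ m : E, X m = K (g m)) :
    ∀ m v w : E, ⟪fderiv ℝ X m (K v), w⟫ = ⟪v, fderiv ℝ X m (K w)⟫ := by
  intro m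
  have hf' : ∀ x, HasFDerivAt f (innerSL ℝ (g x)) x := fun x ↦
    .of_fderiv_apply_eq_inner (hf.differentiable (by norm_num) x) (hgrad x)
  have hHess := isSymmetric_fderiv_of_hasFDerivAt_innerSL (.of_forall hf') (hg m)
  have hXd : fderiv ℝ X m = K.comp (fderiv ℝ g m) := by
    rw [funext hX]
    exact (K.hasFDerivAt.comp m (hg m).hasFDerivAt).fderiv
  rw [hXd]
  exact hHess.skew_comp_comp_skew (K := K) hK
end

section
/- Let m₀ : ℝ → ℝ be a smooth 2π-periodic function, let β ∈ ℝ, and define the operator K by (K v)(x) = m₀(x) v′(x) + (m₀ v)′(x) + β v‴(x). Then the bilinear form γ(u, v) = ∫₀^{2π} u(x) (K v)(x) dx satisfies the 2-cocycle (Jacobi) identity: for all smooth 2π-periodic u, v, w : ℝ → ℝ, ∫₀^{2π} ( [u,v](x) · (K w)(x) + [v,w](x) · (K u)(x) + [w,u](x) · (K v)(x) ) dx = 0, where [u, v] = u v′ − u′ v. -/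
open Real

lemma periodic_deriv' {f : ℝ → ℝ} {c : ℝ} (hf : Function.Periodic f c) :
    Function.Periodic (deriv f) c := by
  intro x
  have h : (fun y => f (y + c)) = f := funext hf
  rw [← deriv_comp_add_const, h]

/-- The bilinear form `γ(u,v) = ∫ u · K v` associated with `K = m₀ D + D m₀ + β D³`
satisfies the 2-cocycle (Jacobi) identity on smooth `2π`-periodic vector fields, where
`[u,v] = u v' − u' v`. -/
theorem K_cocycle (m₀ : ℝ → ℝ) (β : ℝ)
    (hm₀ : ContDiff ℝ (⊤ : ℕ∞) m₀) (hm₀p : Function.Periodic m₀ (2 * π))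
    (K : (ℝ → ℝ) → (ℝ → ℝ))
    (hK : ∀ v : ℝ → ℝ, ∀ x : ℝ,
      K v x = m₀ x * deriv v x + deriv (fun y => m₀ y * v y) x + β * iteratedDeriv 3 v x)
    (bracket : (ℝ → ℝ) → (ℝ → ℝ) → (ℝ → ℝ))
    (hbracket : ∀ u v : ℝ → ℝ, ∀ x : ℝ, bracket u v x = u x * deriv v x - deriv u x * v x)
    (u v w : ℝ → ℝ) (hu : ContDiff ℝ (⊤ : ℕ∞) u) (hv : ContDiff ℝ (⊤ : ℕ∞) v) (hw : ContDiff ℝ (⊤ : ℕ∞) w)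
    (hup : Function.Periodic u (2 * π)) (hvp : Function.Periodic v (2 * π))
    (hwp : Function.Periodic w (2 * π)) :
    ∫ x in (0:ℝ)..(2 * π),
        (bracket u v x * K w x + bracket v w x * K u x + bracket w u x * K v x) = 0 := by
  -- smoothness of derivatives
  have D1 : ∀ {f : ℝ → ℝ}, ContDiff ℝ (⊤ : ℕ∞) f → ContDiff ℝ (⊤ : ℕ∞) (deriv f) :=
    fun hf => (contDiff_infty_iff_deriv.mp hf).2
  have hu0 : ContDiff ℝ (⊤ : ℕ∞) u := hu.of_le (by simp)
  have hv0 : ContDiff ℝ (⊤ : ℕ∞) v := hv.of_le (by simp)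
  have hw0 : ContDiff ℝ (⊤ : ℕ∞) w := hw.of_le (by simp)
  have hm0 : ContDiff ℝ (⊤ : ℕ∞) m₀ := hm₀.of_le (by simp)
  have hu1 := D1 hu0; have hu2 := D1 hu1; have hu3 := D1 hu2
  have hv1 := D1 hv0; have hv2 := D1 hv1; have hv3 := D1 hv2
  have hw1 := D1 hw0; have hw2 := D1 hw1; have hw3 := D1 hw2
  have hm1 := D1 hm0
  have HD : ∀ {f : ℝ → ℝ}, ContDiff ℝ (⊤ : ℕ∞) f → ∀ x : ℝ, HasDerivAt f (deriv f x) x :=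
    fun hf x => ((hf.differentiable (by simp)) x).hasDerivAt
  -- iterated derivative as repeated deriv
  have hiter : ∀ f : ℝ → ℝ, iteratedDeriv 3 f = deriv (deriv (deriv f)) := by
    intro f
    rw [show (3 : ℕ) = 2 + 1 from rfl, iteratedDeriv_succ, iteratedDeriv_succ,
      iteratedDeriv_one]
  -- deriv of products m₀ * f
  have hmul : ∀ (f : ℝ → ℝ), ContDiff ℝ (⊤ : ℕ∞) f → ∀ x : ℝ,
      deriv (fun y => m₀ y * f y) x = deriv m₀ x * f x + m₀ x * deriv f x := by
    intro f hf x
    exact deriv_fun_mul ((hm0.differentiable (by simp)) x) ((hf.differentiable (by simp)) x)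
  -- the explicit integrand
  set g : ℝ → ℝ := fun x => β *
      (u x * deriv v x * deriv (deriv (deriv w)) x
        - deriv u x * v x * deriv (deriv (deriv w)) x
        + v x * deriv w x * deriv (deriv (deriv u)) x
        - deriv v x * w x * deriv (deriv (deriv u)) x
        + w x * deriv u x * deriv (deriv (deriv v)) x
        - deriv w x * u x * deriv (deriv (deriv v)) x) with hg
  have hgeq : ∀ x : ℝ,
      bracket u v x * K w x + bracket v w x * K u x + bracket w u x * K v x = g x := by
    intro x
    rw [hbracket, hbracket, hbracket, hK, hK, hK, hmul u hu0 x, hmul v hv0 x, hmul w hw0 x,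
      hiter, hiter, hiter, hg]
    ring
  -- the primitive
  set F : ℝ → ℝ := fun x => β *
      (u x * deriv v x * deriv (deriv w) x
        - u x * deriv (deriv v) x * deriv w x
        - deriv u x * v x * deriv (deriv w) x
        + deriv u x * deriv (deriv v) x * w x
        + deriv (deriv u) x * v x * deriv w x
        - deriv (deriv u) x * deriv v x * w x) with hF
  have hFd : ∀ x : ℝ, HasDerivAt F (g x) x := by
    intro x
    have h :=
      ((((((HD hu0 x).mul (HD hv1 x)).mul (HD hw2 x)).sub
          (((HD hu0 x).mul (HD hv2 x)).mul (HD hw1 x))).sub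
          (((HD hu1 x).mul (HD hv0 x)).mul (HD hw2 x))).add
          (((HD hu1 x).mul (HD hv2 x)).mul (HD hw0 x))).add
          (((HD hu2 x).mul (HD hv0 x)).mul (HD hw1 x))
    have h2 := (h.sub (((HD hu2 x).mul (HD hv1 x)).mul (HD hw0 x))).const_mul β
    refine HasDerivAt.congr_deriv h2 ?_
    rw [hg]; simp only [Pi.mul_apply]; ring
  -- integral of the derivative
  have hcont : Continuous g := by
    rw [hg]
    exact ((((((hu0.continuous.mul hv1.continuous).mul hw3.continuous).sub
      ((hu1.continuous.mul hv0.continuous).mul hw3.continuous)).add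
      ((hv0.continuous.mul hw1.continuous).mul hu3.continuous)).sub
      ((hv1.continuous.mul hw0.continuous).mul hu3.continuous)).add
      ((hw0.continuous.mul hu1.continuous).mul hv3.continuous)).sub
      ((hw1.continuous.mul hu0.continuous).mul hv3.continuous) |> continuous_const.mul
  have hint : IntervalIntegrable g MeasureTheory.volume 0 (2 * π) :=
    hcont.intervalIntegrable 0 (2 * π)
  have hInt : (∫ x in (0:ℝ)..(2 * π),
      (bracket u v x * K w x + bracket v w x * K u x + bracket w u x * K v x))
      = ∫ x in (0:ℝ)..(2 * π), g x := by
    apply intervalIntegral.integral_congr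
    intro x _
    exact hgeq x
  rw [hInt,
    intervalIntegral.integral_eq_sub_of_hasDerivAt (fun x _ => hFd x) hint]
  -- periodicity of F
  have hFp : F (2 * π) = F 0 := by
    have pu1 := periodic_deriv' hup; have pu2 := periodic_deriv' pu1
    have pv1 := periodic_deriv' hvp; have pv2 := periodic_deriv' pv1
    have pw1 := periodic_deriv' hwp; have pw2 := periodic_deriv' pw1
    simp only [hF]
    rw [show (2 : ℝ) * π = 0 + 2 * π by ring, hup 0, hvp 0, hwp 0, pu1 0, pv1 0,
      pw1 0, pu2 0, pv2 0, pw2 0]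
  rw [hFp, sub_self]
end

section
/- The Gelfand–Fuks cocycle is not a coboundary: there is no smooth 2π-periodic function m₀ : ℝ → ℝ such that for all smooth 2π-periodic u, v : ℝ → ℝ one has ∫₀^{2π} u‴(x) v(x) dx = ∫₀^{2π} m₀(x) (u(x) v′(x) − u′(x) v(x)) dx. -/
open Real

lemma hs2 (x : ℝ) : HasDerivAt (fun x => Real.sin (2*x)) (2 * Real.cos (2*x)) x := by
  simpa [Function.comp_def, mul_comm] using
    (Real.hasDerivAt_sin (2*x)).comp x ((hasDerivAt_id x).const_mul 2)

lemma hc2 (x : ℝ) : HasDerivAt (fun x => Real.cos (2*x)) (-(2 * Real.sin (2*x))) x := by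
  simpa [Function.comp_def, mul_comm, mul_assoc] using
    (Real.hasDerivAt_cos (2*x)).comp x ((hasDerivAt_id x).const_mul 2)

lemma deriv_sin2 : deriv (fun x => Real.sin (2*x)) = fun x => 2 * Real.cos (2*x) :=
  funext fun x => (hs2 x).deriv

lemma deriv_cos2 : deriv (fun x => Real.cos (2*x)) = fun x => -(2 * Real.sin (2*x)) :=
  funext fun x => (hc2 x).deriv

lemma id3_sin : iteratedDeriv 3 Real.sin = fun x => -Real.cos x := by
  simp [iteratedDeriv_succ, Real.deriv_sin, Real.deriv_cos]

lemma id3_sin2 : iteratedDeriv 3 (fun x => Real.sin (2*x)) = fun x => -(8 * Real.cos (2*x)) := by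
  have h2 : deriv (fun x => 2 * Real.cos (2*x)) = fun x => -(4 * Real.sin (2*x)) := by
    funext x
    have H : HasDerivAt (fun x => 2 * Real.cos (2*x)) (-(4 * Real.sin (2*x))) x := by
      have := (hc2 x).const_mul 2
      exact this.congr_deriv (by ring)
    exact H.deriv
  have h3 : deriv (fun x => -(4 * Real.sin (2*x))) = fun x => -(8 * Real.cos (2*x)) := by
    funext x
    have H : HasDerivAt (fun x => -(4 * Real.sin (2*x))) (-(8 * Real.cos (2*x))) x := by
      have := ((hs2 x).const_mul 4).neg
      exact this.congr_deriv (by ring)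
    exact H.deriv
  rw [show (3:ℕ) = 2 + 1 from rfl, iteratedDeriv_succ,
    show (2:ℕ) = 1 + 1 from rfl, iteratedDeriv_succ, iteratedDeriv_one,
    deriv_sin2, h2, h3]

lemma cd_sin2 : ContDiff ℝ (⊤ : ℕ∞) (fun x => Real.sin (2*x)) :=
  Real.contDiff_sin.comp (contDiff_const.mul contDiff_id)

lemma cd_cos2 : ContDiff ℝ (⊤ : ℕ∞) (fun x => Real.cos (2*x)) :=
  Real.contDiff_cos.comp (contDiff_const.mul contDiff_id)

lemma per_sin2 : Function.Periodic (fun x => Real.sin (2*x)) (2 * π) := by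
  intro x
  have : 2 * (x + 2*π) = 2*x + 2*π + 2*π := by ring
  simp only [this, Real.sin_add_two_pi]

lemma per_cos2 : Function.Periodic (fun x => Real.cos (2*x)) (2 * π) := by
  intro x
  have : 2 * (x + 2*π) = 2*x + 2*π + 2*π := by ring
  simp only [this, Real.cos_add_two_pi]

lemma int_cos2_sq : ∫ x in (0:ℝ)..(2*π), Real.cos (2*x) ^ 2 = π := by
  have := intervalIntegral.integral_comp_mul_left (fun y => Real.cos y ^ 2) (two_ne_zero (α := ℝ))
    (a := 0) (b := 2*π)
  rw [this]
  have h4 : Real.sin (2 * (2*π)) = 0 := by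
    have : (2:ℝ) * (2*π) = (4:ℕ) * π := by push_cast; ring
    rw [this, Real.sin_nat_mul_pi]
  rw [integral_cos_sq, h4]
  simp [Real.sin_zero, smul_eq_mul]

/-- The Gelfand–Fuks cocycle `(u,v) ↦ ∫ u‴ v` is not a coboundary: no smooth
`2π`-periodic function `m₀` represents it via `(u,v) ↦ ∫ m₀ · [u,v]`. -/
theorem gelfand_fuks_not_coboundary :
    ¬ ∃ m₀ : ℝ → ℝ, ContDiff ℝ (⊤ : ℕ∞) m₀ ∧ Function.Periodic m₀ (2 * π) ∧
      ∀ u v : ℝ → ℝ, ContDiff ℝ (⊤ : ℕ∞) u → ContDiff ℝ (⊤ : ℕ∞) v →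
        Function.Periodic u (2 * π) → Function.Periodic v (2 * π) →
        ∫ x in (0:ℝ)..(2 * π), iteratedDeriv 3 u x * v x
          = ∫ x in (0:ℝ)..(2 * π), m₀ x * (u x * deriv v x - deriv u x * v x) := by
  rintro ⟨m₀, -, -, h⟩
  set A : ℝ := ∫ x in (0:ℝ)..(2 * π), m₀ x with hA
  -- First test: u = sin, v = cos
  have h1 := h Real.sin Real.cos Real.contDiff_sin Real.contDiff_cos
    Real.sin_periodic Real.cos_periodic
  have e1L : ∫ x in (0:ℝ)..(2 * π), iteratedDeriv 3 Real.sin x * Real.cos x = -π := by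
    have : ∀ x ∈ Set.uIcc (0:ℝ) (2*π), iteratedDeriv 3 Real.sin x * Real.cos x
        = -(Real.cos x ^ 2) := by
      intro x _; rw [id3_sin]; ring
    rw [intervalIntegral.integral_congr this, intervalIntegral.integral_neg, integral_cos_sq]
    simp [Real.sin_two_pi, Real.cos_two_pi]
  have e1R : ∫ x in (0:ℝ)..(2 * π),
      m₀ x * (Real.sin x * deriv Real.cos x - deriv Real.sin x * Real.cos x) = -A := by
    have : ∀ x ∈ Set.uIcc (0:ℝ) (2*π),
        m₀ x * (Real.sin x * deriv Real.cos x - deriv Real.sin x * Real.cos x) = -(m₀ x) := by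
      intro x _
      rw [Real.deriv_cos, Real.deriv_sin]
      have hsq := Real.sin_sq_add_cos_sq x
      linear_combination (-(m₀ x)) * hsq
    rw [intervalIntegral.integral_congr this, intervalIntegral.integral_neg]
  have eq1 : A = π := by
    rw [e1L, e1R] at h1; linarith
  -- Second test: u = sin (2x), v = cos (2x)
  have h2 := h (fun x => Real.sin (2*x)) (fun x => Real.cos (2*x)) cd_sin2 cd_cos2
    per_sin2 per_cos2
  have e2L : ∫ x in (0:ℝ)..(2 * π),
      iteratedDeriv 3 (fun x => Real.sin (2*x)) x * Real.cos (2*x) = -(8 * π) := by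
    have : ∀ x ∈ Set.uIcc (0:ℝ) (2*π),
        iteratedDeriv 3 (fun x => Real.sin (2*x)) x * Real.cos (2*x)
          = -(8 * (Real.cos (2*x) ^ 2)) := by
      intro x _; rw [id3_sin2]; ring
    rw [intervalIntegral.integral_congr this, intervalIntegral.integral_neg,
      intervalIntegral.integral_const_mul, int_cos2_sq]
  have e2R : ∫ x in (0:ℝ)..(2 * π),
      m₀ x * (Real.sin (2*x) * deriv (fun x => Real.cos (2*x)) x
        - deriv (fun x => Real.sin (2*x)) x * Real.cos (2*x)) = -(2 * A) := by
    have : ∀ x ∈ Set.uIcc (0:ℝ) (2*π),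
        m₀ x * (Real.sin (2*x) * deriv (fun x => Real.cos (2*x)) x
          - deriv (fun x => Real.sin (2*x)) x * Real.cos (2*x)) = -(2 * m₀ x) := by
      intro x _
      rw [deriv_cos2, deriv_sin2]
      have hsq := Real.sin_sq_add_cos_sq (2*x)
      linear_combination (-2 * m₀ x) * hsq
    rw [intervalIntegral.integral_congr this, intervalIntegral.integral_neg,
      intervalIntegral.integral_const_mul]
  have eq2 : 2 * A = 8 * π := by
    rw [e2L, e2R] at h2; linarith
  have hpi := Real.pi_pos
  rw [eq1] at eq2
  linarith
end

section
/- Let k ∈ ℕ, α, β ∈ ℝ, and let n be an integer with n ≥ 1. Define f_k(r) = ∑_{i=0}^{k} r^{2i}, and define the complex-valued functions u(x) = exp(inx), m(x) = f_k(n) exp(inx), M(x) = exp(−2inx), N(x) = exp(inx). Define (P M)(x) = α[ 2u′M′ + uM″ + (2/f_k(2n)) m M″ + (1/f_k(2n)) m′ M′ ](x) + β[ 2u′M‴ + uM⁗ + (2/f_k(2n)) m M⁗ + (1/f_k(2n)) m′ M‴ ](x), and (P N)(x) = α[ 2u′N′ + uN″ + (2/f_k(n)) m N″ + (1/f_k(n))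 m′ N′ ](x) + β[ 2u′N‴ + uN⁗ + (2/f_k(n)) m N⁗ + (1/f_k(n)) m′ N‴ ](x). Then (1/2π) ∫₀^{2π} (P M)(x) · N(x) dx = (24 n⁴ β − 6 n² α) · f_k(n)/f_k(2n), and (1/2π) ∫₀^{2π} M(x) · (P N)(x) dx = 6 n⁴ β − 6 n² α. -/
open Real Complex Finset

/-!
On pure exponentials `u = e^{ax}`, `m = μ e^{ax}`, `F = e^{bx}` the operator `P` acts by
multiplication by a polynomial symbol in `a, b`, producing `e^{(a+b)x}`. For the frequencies
`n, -2n, n` the three exponents in each pairing sum to zero, so both integrands are constant and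
their averages are values of the symbol. For `⟨M, P N⟩` the factor `μ / f = f_k(n) / f_k(n)`
cancels because `f_k ≥ 1`.
-/

lemma one_le_sum_range_pow_two_mul {R : Type*} [CommRing R] [LinearOrder R]
    [IsStrictOrderedRing R] (r : R) (k : ℕ) : 1 ≤ ∑ i ∈ range (k + 1), r ^ (2 * i) := by
  rw [sum_range_succ']
  simpa using sum_nonneg fun i _ => (pow_mul r 2 (i + 1)).symm ▸ pow_nonneg (sq_nonneg r) _

lemma hasDerivAt_cexp_mul_ofReal (c : ℂ) (x : ℝ) :
    HasDerivAt (fun y : ℝ => cexp (c * y)) (c * cexp (c * x)) x := by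
  simpa [mul_comm] using ((hasDerivAt_id (x : ℂ)).const_mul c).cexp.comp_ofReal

lemma iteratedDeriv_cexp_mul_ofReal (c : ℂ) (j : ℕ) :
    iteratedDeriv j (fun y : ℝ => cexp (c * y)) = fun y : ℝ => c ^ j * cexp (c * y) := by
  induction j with
  | zero => simp
  | succ j ih =>
    rw [iteratedDeriv_succ, ih]
    funext x
    rw [((hasDerivAt_cexp_mul_ofReal c x).const_mul (c ^ j)).deriv, pow_succ, mul_assoc]

lemma deriv_const_mul_cexp_mul_ofReal (A c : ℂ) :
    deriv (fun y : ℝ => A * cexp (c * y)) = fun y : ℝ => A * (c * cexp (c * y)) :=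
  funext fun x => ((hasDerivAt_cexp_mul_ofReal c x).const_mul A).deriv

noncomputable section

/-- `P(m) F = dX_k(m) (K F)` as written out in the paper, where `f` is `f_k` evaluated at the
frequency of `F` (the multiplier of `A_k⁻¹` on it). -/
def opP (α β f : ℂ) (u m F : ℝ → ℂ) (x : ℝ) : ℂ :=
  α * (2 * deriv u x * deriv F x + u x * iteratedDeriv 2 F x
      + (2 / f) * m x * iteratedDeriv 2 F x + (1 / f) * deriv m x * deriv F x)
    + β * (2 * deriv u x * iteratedDeriv 3 F x + u x * iteratedDeriv 4 F x
      + (2 / f) * m x * iteratedDeriv 4 F x + (1 / f) * deriv m x * iteratedDeriv 3 F x)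

def symbolP (α β f μ a b : ℂ) : ℂ :=
  α * (2 * a * b + b ^ 2 + 2 / f * μ * b ^ 2 + 1 / f * μ * a * b)
    + β * (2 * a * b ^ 3 + b ^ 4 + 2 / f * μ * b ^ 4 + 1 / f * μ * a * b ^ 3)

lemma opP_cexp (α β f μ a b : ℂ) (x : ℝ) :
    opP α β f (fun y => cexp (a * y)) (fun y => μ * cexp (a * y)) (fun y => cexp (b * y)) x
      = symbolP α β f μ a b * cexp ((a + b) * x) := by
  rw [opP, deriv_const_mul_cexp_mul_ofReal]
  simp only [symbolP, ← iteratedDeriv_one, iteratedDeriv_cexp_mul_ofReal, add_mul, Complex.exp_add]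
  ring

lemma opP_cexp_mul_cexp {α β f μ a b c : ℂ} (habc : a + b + c = 0) (x : ℝ) :
    opP α β f (fun y => cexp (a * y)) (fun y => μ * cexp (a * y)) (fun y => cexp (b * y)) x
      * cexp (c * x) = symbolP α β f μ a b := by
  rw [opP_cexp, mul_assoc, ← Complex.exp_add, ← add_mul, habc, zero_mul, Complex.exp_zero,
    mul_one]

lemma symbolP_I_mul_neg_two_I_mul (α β f μ n : ℂ) :
    symbolP α β f μ (I * n) (-2 * I * n) = (24 * n ^ 4 * β - 6 * n ^ 2 * α) * μ / f := by
  simp only [symbolP]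
  ring_nf
  simp only [I_sq, I_pow_four]
  ring

lemma symbolP_I_mul_self {f : ℂ} (hf : f ≠ 0) (α β n : ℂ) :
    symbolP α β f f (I * n) (I * n) = 6 * n ^ 4 * β - 6 * n ^ 2 * α := by
  simp only [symbolP]
  field_simp
  ring_nf
  simp only [I_sq, I_pow_four]
  ring

lemma average_eq_of_forall_eq {g : ℝ → ℂ} {c : ℂ} (hg : ∀ x, g x = c) :
    1 / (2 * (π : ℂ)) * ∫ x in (0 : ℝ)..2 * π, g x = c := by
  simp only [hg, intervalIntegral.integral_const, sub_zero, Complex.real_smul]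
  push_cast
  field_simp

end

theorem pairing_values_general (k : ℕ) (α β : ℝ) (n : ℤ)
    (fk : ℤ → ℝ) (hfk : ∀ r : ℤ, fk r = ∑ i ∈ Finset.range (k + 1), (r : ℝ) ^ (2 * i))
    (u m M N PM PN : ℝ → ℂ)
    (hu : ∀ x : ℝ, u x = Complex.exp (I * n * x))
    (hm : ∀ x : ℝ, m x = (fk n : ℂ) * Complex.exp (I * n * x))
    (hM : ∀ x : ℝ, M x = Complex.exp (-2 * I * n * x))
    (hN : ∀ x : ℝ, N x = Complex.exp (I * n * x))
    (hPM : ∀ x : ℝ, PM x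
      = (α : ℂ) * (2 * deriv u x * deriv M x + u x * iteratedDeriv 2 M x
          + (2 / (fk (2 * n) : ℂ)) * m x * iteratedDeriv 2 M x
          + (1 / (fk (2 * n) : ℂ)) * deriv m x * deriv M x)
        + (β : ℂ) * (2 * deriv u x * iteratedDeriv 3 M x + u x * iteratedDeriv 4 M x
          + (2 / (fk (2 * n) : ℂ)) * m x * iteratedDeriv 4 M x
          + (1 / (fk (2 * n) : ℂ)) * deriv m x * iteratedDeriv 3 M x))
    (hPN : ∀ x : ℝ, PN x
      = (α : ℂ) * (2 * deriv u x * deriv N x + u x * iteratedDeriv 2 N x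
          + (2 / (fk n : ℂ)) * m x * iteratedDeriv 2 N x
          + (1 / (fk n : ℂ)) * deriv m x * deriv N x)
        + (β : ℂ) * (2 * deriv u x * iteratedDeriv 3 N x + u x * iteratedDeriv 4 N x
          + (2 / (fk n : ℂ)) * m x * iteratedDeriv 4 N x
          + (1 / (fk n : ℂ)) * deriv m x * iteratedDeriv 3 N x)) :
    (1 / (2 * (π : ℂ))) * (∫ x in (0:ℝ)..(2 * π), PM x * N x)
        = ((24 * (n : ℂ) ^ 4 * β - 6 * (n : ℂ) ^ 2 * α) * (fk n : ℂ) / (fk (2 * n) : ℂ)) ∧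
      (1 / (2 * (π : ℂ))) * (∫ x in (0:ℝ)..(2 * π), M x * PN x)
        = 6 * (n : ℂ) ^ 4 * β - 6 * (n : ℂ) ^ 2 * α := by
  have hfn : (fk n : ℂ) ≠ 0 := by
    have := hfk n ▸ one_le_sum_range_pow_two_mul (n : ℝ) k
    exact_mod_cast (zero_lt_one.trans_le this).ne'
  have hPM' : ∀ x, PM x = opP α β (fk (2 * n)) u m M x := hPM
  have hPN' : ∀ x, PN x = opP α β (fk n) u m N x := hPN
  obtain rfl : u = _ := funext hu
  obtain rfl : m = _ := funext hm
  obtain rfl : M = _ := funext hM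
  obtain rfl : N = _ := funext hN
  refine ⟨average_eq_of_forall_eq fun x => ?_, average_eq_of_forall_eq fun x => ?_⟩
  · rw [hPM', opP_cexp_mul_cexp (by ring), symbolP_I_mul_neg_two_I_mul]
  · rw [hPN', mul_comm, opP_cexp_mul_cexp (by ring), symbolP_I_mul_self hfn]

/-- The two explicit pairings `⟨P(m)M, N⟩` and `⟨M, P(m)N⟩` used in the proof of
the main theorem, for the frequencies `a = n`, `b = -2n`, `c = n`. -/
theorem pairing_values (k : ℕ) (α β : ℝ) (n : ℤ) (hn : 1 ≤ n)
    (fk : ℤ → ℝ) (hfk : ∀ r : ℤ, fk r = ∑ i ∈ Finset.range (k + 1), (r : ℝ) ^ (2 * i))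
    (u m M N PM PN : ℝ → ℂ)
    (hu : ∀ x : ℝ, u x = Complex.exp (I * n * x))
    (hm : ∀ x : ℝ, m x = (fk n : ℂ) * Complex.exp (I * n * x))
    (hM : ∀ x : ℝ, M x = Complex.exp (-2 * I * n * x))
    (hN : ∀ x : ℝ, N x = Complex.exp (I * n * x))
    (hPM : ∀ x : ℝ, PM x
      = (α : ℂ) * (2 * deriv u x * deriv M x + u x * iteratedDeriv 2 M x
          + (2 / (fk (2 * n) : ℂ)) * m x * iteratedDeriv 2 M x
          + (1 / (fk (2 * n) : ℂ)) * deriv m x * deriv M x)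
        + (β : ℂ) * (2 * deriv u x * iteratedDeriv 3 M x + u x * iteratedDeriv 4 M x
          + (2 / (fk (2 * n) : ℂ)) * m x * iteratedDeriv 4 M x
          + (1 / (fk (2 * n) : ℂ)) * deriv m x * iteratedDeriv 3 M x))
    (hPN : ∀ x : ℝ, PN x
      = (α : ℂ) * (2 * deriv u x * deriv N x + u x * iteratedDeriv 2 N x
          + (2 / (fk n : ℂ)) * m x * iteratedDeriv 2 N x
          + (1 / (fk n : ℂ)) * deriv m x * deriv N x)
        + (β : ℂ) * (2 * deriv u x * iteratedDeriv 3 N x + u x * iteratedDeriv 4 N x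
          + (2 / (fk n : ℂ)) * m x * iteratedDeriv 4 N x
          + (1 / (fk n : ℂ)) * deriv m x * iteratedDeriv 3 N x)) :
    (1 / (2 * (π : ℂ))) * (∫ x in (0:ℝ)..(2 * π), PM x * N x)
        = ((24 * (n : ℂ) ^ 4 * β - 6 * (n : ℂ) ^ 2 * α) * (fk n : ℂ) / (fk (2 * n) : ℂ)) ∧
      (1 / (2 * (π : ℂ))) * (∫ x in (0:ℝ)..(2 * π), M x * PN x)
        = 6 * (n : ℂ) ^ 4 * β - 6 * (n : ℂ) ^ 2 * α :=
  pairing_values_general k α β n fk hfk u m M N PM PN hu hm hM hN hPM hPN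
end

section
/- Let k ∈ ℕ, α, β ∈ ℝ, and let a, b, c be integers. Define f_k(r) = ∑_{i=0}^{k} r^{2i}, and define the complex-valued functions u(x) = exp(iax), m(x) = f_k(a) exp(iax), M(x) = exp(ibx). Define (P M)(x) = α[ 2u′M′ + uM″ + (2/f_k(b)) m M″ + (1/f_k(b)) m′ M′ ](x) + β[ 2u′M‴ + uM⁗ + (2/f_k(b)) m M⁗ + (1/f_k(b)) m′ M‴ ](x). Then (1/2π) ∫₀^{2π} (P M)(x) · exp(icx) dx equals [ (2ab³ + b⁴)β − (2ab + b²)α ] + [ (ab³ + 2b⁴)β − (ab + 2b²)α ] · f_k(a)/f_k(b) if a + b + c = 0, and equals 0 if a + b + c ≠ 0. -/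
/-!
Since `d/dx exp(i r x) = i r exp(i r x)`, every term of `P M` is a constant multiple of
`exp(i (a + b) x)`, the constant being read off with `i² = -1`. Multiplying by `exp(i c x)` and
averaging over a period then keeps exactly this constant when `a + b + c = 0` and kills it
otherwise, by orthogonality of the characters `exp(i n x)`.
-/

open Real Complex

lemma hasDerivAt_cexp_const_mul_ofReal (z : ℂ) (x : ℝ) :
    HasDerivAt (fun t : ℝ => exp (z * t)) (z * exp (z * x)) x := by
  simpa [mul_comm] using (((hasDerivAt_id (x : ℂ)).const_mul z).cexp).comp_ofReal

lemma iteratedDeriv_cexp_const_mul_ofReal (j : ℕ) (z : ℂ) :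
    iteratedDeriv j (fun t : ℝ => exp (z * t)) = fun t : ℝ => z ^ j * exp (z * t) := by
  induction j with
  | zero => simp
  | succ j ih =>
    ext x
    rw [iteratedDeriv_succ, ih, ((hasDerivAt_cexp_const_mul_ofReal z x).const_mul _).deriv,
      pow_succ, mul_assoc]

lemma integral_exp_int_mul_I (n : ℤ) :
    ∫ x in (0 : ℝ)..2 * π, exp (I * n * x) = if n = 0 then 2 * (π : ℂ) else 0 := by
  split_ifs with hn
  · simp [hn]
  · have hperiod : exp (I * n * (2 * π : ℝ)) = 1 := by
      rw [← exp_int_mul_two_pi_mul_I n]; push_cast; ring_nf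
    rw [integral_exp_mul_complex (by simp [hn, I_ne_zero]), hperiod]
    simp

theorem pairing_general_general (α β : ℝ) (a b c : ℤ)
    (fk : ℤ → ℝ)
    (u m M PM : ℝ → ℂ)
    (hu : ∀ x : ℝ, u x = Complex.exp (I * a * x))
    (hm : ∀ x : ℝ, m x = (fk a : ℂ) * Complex.exp (I * a * x))
    (hM : ∀ x : ℝ, M x = Complex.exp (I * b * x))
    (hPM : ∀ x : ℝ, PM x
      = (α : ℂ) * (2 * deriv u x * deriv M x + u x * iteratedDeriv 2 M x
          + (2 / (fk b : ℂ)) * m x * iteratedDeriv 2 M x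
          + (1 / (fk b : ℂ)) * deriv m x * deriv M x)
        + (β : ℂ) * (2 * deriv u x * iteratedDeriv 3 M x + u x * iteratedDeriv 4 M x
          + (2 / (fk b : ℂ)) * m x * iteratedDeriv 4 M x
          + (1 / (fk b : ℂ)) * deriv m x * iteratedDeriv 3 M x)) :
    (a + b + c = 0 →
      (1 / (2 * (π : ℂ))) * (∫ x in (0:ℝ)..(2 * π), PM x * Complex.exp (I * c * x))
        = ((2 * (a : ℂ) * (b : ℂ) ^ 3 + (b : ℂ) ^ 4) * β
            - (2 * (a : ℂ) * (b : ℂ) + (b : ℂ) ^ 2) * α)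
          + (((a : ℂ) * (b : ℂ) ^ 3 + 2 * (b : ℂ) ^ 4) * β
            - ((a : ℂ) * (b : ℂ) + 2 * (b : ℂ) ^ 2) * α) * (fk a : ℂ) / (fk b : ℂ)) ∧
    (a + b + c ≠ 0 →
      (1 / (2 * (π : ℂ))) * (∫ x in (0:ℝ)..(2 * π), PM x * Complex.exp (I * c * x)) = 0) := by
  obtain rfl : u = fun x : ℝ => exp (I * a * x) := funext hu
  obtain rfl : m = fun x : ℝ => fk a * exp (I * a * x) := funext hm
  obtain rfl : M = fun x : ℝ => exp (I * b * x) := funext hM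
  set G : ℂ := ((2 * (a : ℂ) * (b : ℂ) ^ 3 + (b : ℂ) ^ 4) * β
            - (2 * (a : ℂ) * (b : ℂ) + (b : ℂ) ^ 2) * α)
          + (((a : ℂ) * (b : ℂ) ^ 3 + 2 * (b : ℂ) ^ 4) * β
            - ((a : ℂ) * (b : ℂ) + 2 * (b : ℂ) ^ 2) * α) * (fk a : ℂ) / (fk b : ℂ) with hG
  have hintegrand (x : ℝ) :
      PM x * exp (I * c * x) = G * exp (I * ((a + b + c : ℤ) : ℂ) * x) := by
    have hexp : exp (I * ((a + b + c : ℤ) : ℂ) * x)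
        = exp (I * a * x) * exp (I * b * x) * exp (I * c * x) := by
      rw [← Complex.exp_add, ← Complex.exp_add]; push_cast; ring_nf
    rw [hPM, hexp, iteratedDeriv_cexp_const_mul_ofReal, iteratedDeriv_cexp_const_mul_ofReal,
      iteratedDeriv_cexp_const_mul_ofReal, (hasDerivAt_cexp_const_mul_ofReal _ x).deriv,
      (hasDerivAt_cexp_const_mul_ofReal _ x).deriv,
      ((hasDerivAt_cexp_const_mul_ofReal _ x).const_mul _).deriv, hG]
    ring_nf
    simp only [I_sq, I_pow_four]
    ring
  have hmean : (1 / (2 * (π : ℂ))) * ∫ x in (0:ℝ)..(2 * π), PM x * exp (I * c * x)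
      = if a + b + c = 0 then G else 0 := by
    rw [intervalIntegral.integral_congr fun x _ => hintegrand x,
      intervalIntegral.integral_const_mul, integral_exp_int_mul_I]
    have hπ : (π : ℂ) ≠ 0 := ofReal_ne_zero.mpr pi_ne_zero
    split_ifs
    · field_simp
    · simp
  exact ⟨fun h => by rw [hmean, if_pos h], fun h => by rw [hmean, if_neg h]⟩

/-- The general pairing formula `⟨P(m)M, N⟩` from the proof of the main theorem, with
`u = exp(iax)`, `m = f_k(a) exp(iax)`, `M = exp(ibx)`, `N = exp(icx)`. -/
theorem pairing_general (k : ℕ) (α β : ℝ) (a b c : ℤ)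
    (fk : ℤ → ℝ) (hfk : ∀ r : ℤ, fk r = ∑ i ∈ Finset.range (k + 1), (r : ℝ) ^ (2 * i))
    (u m M PM : ℝ → ℂ)
    (hu : ∀ x : ℝ, u x = Complex.exp (I * a * x))
    (hm : ∀ x : ℝ, m x = (fk a : ℂ) * Complex.exp (I * a * x))
    (hM : ∀ x : ℝ, M x = Complex.exp (I * b * x))
    (hPM : ∀ x : ℝ, PM x
      = (α : ℂ) * (2 * deriv u x * deriv M x + u x * iteratedDeriv 2 M x
          + (2 / (fk b : ℂ)) * m x * iteratedDeriv 2 M x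
          + (1 / (fk b : ℂ)) * deriv m x * deriv M x)
        + (β : ℂ) * (2 * deriv u x * iteratedDeriv 3 M x + u x * iteratedDeriv 4 M x
          + (2 / (fk b : ℂ)) * m x * iteratedDeriv 4 M x
          + (1 / (fk b : ℂ)) * deriv m x * iteratedDeriv 3 M x)) :
    (a + b + c = 0 →
      (1 / (2 * (π : ℂ))) * (∫ x in (0:ℝ)..(2 * π), PM x * Complex.exp (I * c * x))
        = ((2 * (a : ℂ) * (b : ℂ) ^ 3 + (b : ℂ) ^ 4) * β
            - (2 * (a : ℂ) * (b : ℂ) + (b : ℂ) ^ 2) * α)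
          + (((a : ℂ) * (b : ℂ) ^ 3 + 2 * (b : ℂ) ^ 4) * β
            - ((a : ℂ) * (b : ℂ) + 2 * (b : ℂ) ^ 2) * α) * (fk a : ℂ) / (fk b : ℂ)) ∧
    (a + b + c ≠ 0 →
      (1 / (2 * (π : ℂ))) * (∫ x in (0:ℝ)..(2 * π), PM x * Complex.exp (I * c * x)) = 0) :=
  pairing_general_general α β a b c fk u m M PM hu hm hM hPM
end

section
/- Let k ∈ ℕ and α, β ∈ ℝ, and define f_k(r) = ∑_{i=0}^{k} r^{2i} for integers r. Then the identity (24 n⁴ β − 6 n² α) · f_k(n) = (6 n⁴ β − 6 n² α) · f_k(2n) holds for all integers n ≥ 1 if and only if one of the following holds: (k = 0 and β = 0), or (k = 1 and α + β = 0), or (α = 0 and β = 0). -/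
/-!
Substituting `x = n²` and dividing by `6n²`, the condition says that the polynomial identity
`(4βX − α) · S(X) = (βX − α) · S(4X)`, with `S = 1 + X + ⋯ + Xᵏ`, holds at infinitely many points,
hence identically. Comparing the coefficients of `X` gives `3(α + β) = 0` when `k ≥ 1` (and `β = 0`
when `k = 0`), and comparing those of `Xᵏ⁺¹` gives `4β = 4ᵏβ`, which forces `β = 0` once `k ≥ 2`.
-/

open Finset Polynomial

namespace Polynomial

variable {R : Type*}

-- `(geomPoly 1 k).eval (r²) = f_k(r)` and `(geomPoly 4 k).eval (r²) = f_k(2r)`.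
noncomputable def geomPoly [Semiring R] (c : R) (k : ℕ) : R[X] :=
  ∑ i ∈ range (k + 1), C (c ^ i) * X ^ i

section CommSemiring

variable [CommSemiring R]

theorem coeff_geomPoly (c : R) (k j : ℕ) :
    (geomPoly c k).coeff j = if j ≤ k then c ^ j else 0 := by
  simp only [geomPoly, finsetSum_coeff, coeff_C_mul, coeff_X_pow, mul_ite, mul_one, mul_zero,
    sum_ite_eq, mem_range, Nat.lt_succ_iff]

theorem eval_geomPoly (c x : R) (k : ℕ) :
    (geomPoly c k).eval x = ∑ i ∈ range (k + 1), (c * x) ^ i := by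
  simp [geomPoly, eval_finsetSum, mul_pow]

end CommSemiring

theorem coeff_C_mul_X_sub_C_mul_succ [Ring R] (a b : R) (p : R[X]) (j : ℕ) :
    ((C a * X - C b) * p).coeff (j + 1) = a * p.coeff j - b * p.coeff (j + 1) := by
  rw [sub_mul, coeff_sub, mul_assoc, coeff_C_mul, coeff_X_mul, coeff_C_mul]

end Polynomial

theorem geomPoly_identity_iff {K : Type*} [Field K] [CharZero K] (k : ℕ) (α β : K) :
    (C (4 * β) * X - C α) * geomPoly 1 k = (C β * X - C α) * geomPoly 4 k
      ↔ (k = 0 ∧ β = 0) ∨ (k = 1 ∧ α + β = 0) ∨ (α = 0 ∧ β = 0) := by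
  constructor
  · intro h
    have hcoeff : ∀ j, (4 * β) * (geomPoly 1 k).coeff j - α * (geomPoly 1 k).coeff (j + 1)
        = β * (geomPoly 4 k).coeff j - α * (geomPoly 4 k).coeff (j + 1) := fun j => by
      rw [← coeff_C_mul_X_sub_C_mul_succ, ← coeff_C_mul_X_sub_C_mul_succ, h]
    rcases k with _ | _ | k
    · have hlow : 4 * β = β := by simpa [coeff_geomPoly] using hcoeff 0
      exact Or.inl ⟨rfl, by linear_combination hlow / 3⟩
    · have hlow : 4 * β - α = β - α * 4 := by simpa [coeff_geomPoly] using hcoeff 0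
      exact Or.inr (Or.inl ⟨rfl, by linear_combination hlow / 3⟩)
    · have hlow : 4 * β - α = β - α * 4 := by simpa [coeff_geomPoly] using hcoeff 0
      have htop : 4 * β = β * 4 ^ (k + 2) := by simpa [coeff_geomPoly] using hcoeff (k + 2)
      have h4 : (4 : K) ^ (k + 2) ≠ 4 := by
        have : 4 ^ 1 < 4 ^ (k + 2) := Nat.pow_lt_pow_right (by norm_num) (by omega)
        exact_mod_cast this.ne'
      have hβ : β = 0 := by
        by_contra hβ
        exact h4 (mul_left_cancel₀ hβ (htop.symm.trans (mul_comm 4 β)))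
      exact Or.inr (Or.inr ⟨by linear_combination hlow / 3 - hβ, hβ⟩)
  · rintro (⟨rfl, rfl⟩ | ⟨rfl, hαβ⟩ | ⟨rfl, rfl⟩)
    · simp [geomPoly]
    · obtain rfl : β = -α := by linear_combination hαβ
      simp only [geomPoly, sum_range_succ, range_one, sum_singleton, map_mul, map_neg, map_pow,
        map_one, one_pow, pow_zero, pow_one, mul_one]
      ring
    · simp

theorem symmetry_condition_iff_geomPoly_identity (k : ℕ) (α β : ℝ) :
    (∀ n : ℤ, 1 ≤ n →
      (24 * (n : ℝ) ^ 4 * β - 6 * (n : ℝ) ^ 2 * α)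
          * (∑ i ∈ range (k + 1), (n : ℝ) ^ (2 * i))
        = (6 * (n : ℝ) ^ 4 * β - 6 * (n : ℝ) ^ 2 * α)
          * (∑ i ∈ range (k + 1), ((2 * n : ℤ) : ℝ) ^ (2 * i)))
      ↔ (C (4 * β) * X - C α) * geomPoly 1 k = (C β * X - C α) * geomPoly 4 k := by
  have hlhs (x : ℝ) : (24 * x ^ 4 * β - 6 * x ^ 2 * α) * ∑ i ∈ range (k + 1), x ^ (2 * i)
      = 6 * x ^ 2 * ((C (4 * β) * X - C α) * geomPoly 1 k).eval (x ^ 2) := by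
    simp only [eval_mul, eval_sub, eval_C, eval_X, eval_geomPoly, one_mul, ← pow_mul]
    ring
  have hrhs (x : ℝ) : (6 * x ^ 4 * β - 6 * x ^ 2 * α) * ∑ i ∈ range (k + 1), (2 * x) ^ (2 * i)
      = 6 * x ^ 2 * ((C β * X - C α) * geomPoly 4 k).eval (x ^ 2) := by
    simp only [eval_mul, eval_sub, eval_C, eval_X, eval_geomPoly,
      show 4 * x ^ 2 = (2 * x) ^ 2 by ring, ← pow_mul]
    ring
  constructor
  · intro h
    apply eq_of_infinite_eval_eq
    have hsq_inj : Set.InjOn (fun n : ℤ => (n : ℝ) ^ 2) (Set.Ici 1) := fun a ha b hb hab => by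
      have ha' : (0 : ℝ) ≤ a := Int.cast_nonneg (by grind)
      have hb' : (0 : ℝ) ≤ b := Int.cast_nonneg (by grind)
      exact_mod_cast (sq_eq_sq₀ ha' hb').1 hab
    refine ((Set.Ici_infinite 1).image hsq_inj).mono ?_
    rintro _ ⟨n, hn, rfl⟩
    have hn0 : (n : ℝ) ≠ 0 := by exact_mod_cast (show n ≠ 0 by grind)
    have := h n hn
    push_cast at this
    rw [hlhs, hrhs] at this
    exact mul_left_cancel₀ (by positivity) this
  · intro hPQ n _
    push_cast
    rw [hlhs, hrhs, hPQ]

/-- The symmetry condition `(24n⁴β − 6n²α) f_k(n) = (6n⁴β − 6n²α) f_k(2n)` for all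
`n ≥ 1` holds iff `(k = 0 ∧ β = 0)`, or `(k = 1 ∧ α + β = 0)`, or `(α = 0 ∧ β = 0)`. -/
theorem symmetry_condition_iff (k : ℕ) (α β : ℝ) :
    (∀ n : ℤ, 1 ≤ n →
      (24 * (n : ℝ) ^ 4 * β - 6 * (n : ℝ) ^ 2 * α)
          * (∑ i ∈ Finset.range (k + 1), (n : ℝ) ^ (2 * i))
        = (6 * (n : ℝ) ^ 4 * β - 6 * (n : ℝ) ^ 2 * α)
          * (∑ i ∈ Finset.range (k + 1), ((2 * n : ℤ) : ℝ) ^ (2 * i)))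
      ↔ ((k = 0 ∧ β = 0) ∨ (k = 1 ∧ α + β = 0) ∨ (α = 0 ∧ β = 0)) := by
  rw [symmetry_condition_iff_geomPoly_identity, geomPoly_identity_iff]
end

section
/- Let k ∈ ℕ with k ≥ 2 and α, β ∈ ℝ, and define f_k(r) = ∑_{i=0}^{k} r^{2i} for integers r. If (24 n⁴ β − 6 n² α) · f_k(n) = (6 n⁴ β − 6 n² α) · f_k(2n) for all integers n ≥ 1, then α = 0 and β = 0. -/
/-!
Evaluating the condition at `n = 1` and `n = 2` gives two linear equations in `α` and `β`.
With `c = f_k(1) = k + 1` and `y = f_k(2)`, and using `5 f_k(4) = y (3y + 2)` (both sides are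
`(16^(k+1) - 1) / 3`), they read `α (y - c) = β (y - 4c)` and `α (y - 1) = 4 β (y - 6)`.
Their determinant is `3y² - 23y + 20c`, which is positive as soon as `y ≥ 8`; for `k ≥ 2`
we have `y ≥ 1 + 4 + 16`.
-/

open Finset

/-- The paper's `f_k(r)`. -/
def evenPowerSum {R : Type*} [Semiring R] (k : ℕ) (r : R) : R :=
  ∑ i ∈ range (k + 1), r ^ (2 * i)

theorem evenPowerSum_mul_sq_sub_one {R : Type*} [CommRing R] (k : ℕ) (r : R) :
    evenPowerSum k r * (r ^ 2 - 1) = r ^ (2 * (k + 1)) - 1 := by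
  simp only [evenPowerSum, pow_mul]
  exact geom_sum_mul (r ^ 2) (k + 1)

theorem evenPowerSum_one {R : Type*} [Semiring R] (k : ℕ) : evenPowerSum k (1 : R) = k + 1 := by
  simp [evenPowerSum]

theorem twentyOne_le_evenPowerSum_two {k : ℕ} (hk : 2 ≤ k) : 21 ≤ evenPowerSum k (2 : ℝ) := by
  calc (21 : ℝ) = ∑ i ∈ range 3, (2 : ℝ) ^ (2 * i) := by norm_num [sum_range_succ]
    _ ≤ evenPowerSum k 2 :=
      sum_le_sum_of_subset_of_nonneg (range_subset_range.2 (by omega)) fun _ _ _ => by positivity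

theorem five_mul_evenPowerSum_four (k : ℕ) :
    5 * evenPowerSum k (4 : ℝ) = evenPowerSum k 2 * (3 * evenPowerSum k 2 + 2) := by
  have h₂ := evenPowerSum_mul_sq_sub_one k (2 : ℝ)
  have h₄ := evenPowerSum_mul_sq_sub_one k (4 : ℝ)
  have hsq : (4 : ℝ) ^ (2 * (k + 1)) = ((2 : ℝ) ^ (2 * (k + 1))) ^ 2 := by
    rw [show (4 : ℝ) = 2 ^ 2 by norm_num, ← pow_mul, ← pow_mul, mul_comm]
  rw [hsq] at h₄
  generalize (2 : ℝ) ^ (2 * (k + 1)) = x at h₂ h₄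
  linear_combination (1 / 3 : ℝ) * h₄ - (x + 3 * evenPowerSum k 2 + 1) / 3 * h₂

theorem eq_zero_and_eq_zero_of_linear_relations {α β c y : ℝ} (hc : 0 ≤ c) (hy : 8 ≤ y)
    (h₁ : α * (y - c) = β * (y - 4 * c)) (h₂ : α * (y - 1) = 4 * β * (y - 6)) :
    α = 0 ∧ β = 0 := by
  have hdet : 3 * y ^ 2 - 23 * y + 20 * c ≠ 0 := by nlinarith
  constructor
  · refine (mul_eq_zero.1 ?_).resolve_right hdet
    linear_combination 4 * (y - 6) * h₁ - (y - 4 * c) * h₂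
  · refine (mul_eq_zero.1 ?_).resolve_right hdet
    linear_combination (y - 1) * h₁ - (y - c) * h₂

/-- For `k ≥ 2` the symmetry condition forces `α = 0` and `β = 0`: `X_k` is not
Hamiltonian with respect to any modified Lie-Poisson structure with constant `m₀`. -/
theorem symmetry_condition_k_ge_two (k : ℕ) (hk : 2 ≤ k) (α β : ℝ)
    (h : ∀ n : ℤ, 1 ≤ n →
      (24 * (n : ℝ) ^ 4 * β - 6 * (n : ℝ) ^ 2 * α)
          * (∑ i ∈ Finset.range (k + 1), (n : ℝ) ^ (2 * i))
        = (6 * (n : ℝ) ^ 4 * β - 6 * (n : ℝ) ^ 2 * α)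
          * (∑ i ∈ Finset.range (k + 1), ((2 * n : ℤ) : ℝ) ^ (2 * i))) :
    α = 0 ∧ β = 0 := by
  have h₁ : (24 * β - 6 * α) * evenPowerSum k 1 = (6 * β - 6 * α) * evenPowerSum k 2 := by
    simpa [evenPowerSum] using h 1 le_rfl
  have h₂ : (384 * β - 24 * α) * evenPowerSum k 2 = (96 * β - 24 * α) * evenPowerSum k 4 := by
    have h_two := h 2 (by norm_num)
    norm_num at h_two
    exact h_two
  have hy := twentyOne_le_evenPowerSum_two hk
  refine eq_zero_and_eq_zero_of_linear_relations (c := k + 1) (y := evenPowerSum k 2)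
    (by positivity) (by linarith) ?_ ?_
  · rw [evenPowerSum_one] at h₁
    linear_combination h₁ / 6
  · refine mul_left_cancel₀ (a := evenPowerSum k (2 : ℝ)) (by linarith : (0 : ℝ) < _).ne' ?_
    linear_combination (5 / 72 : ℝ) * h₂ + (96 * β - 24 * α) / 72 * five_mul_evenPowerSum_four k
end
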